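/- The group-choice index of the path P_n (n ≥ 3) equals 2 and the group-choice index of the cycle C_n equals 3. -/

import Mathlib

open SimpleGraph

/-- A graph `H` is `k`-group choosable if for every (additive) Abelian group `A` of order at
least `k`, every list assignment giving each vertex a `k`-element subset of `A`, and every
"forbidden difference" function `f` on oriented edges (encoded as an antisymmetric function
on ordered pairs of vertices, which is equivalent to fixing an orientation), there is a list
coloring `c` with `c x - c y ≠ f x y` for every edge `xy`. -/
def GroupChoosable {W : Type} (H : SimpleGraph W) (k : ℕ) : Prop :=
  ∀ (A : Type) [AddCommGroup A] [Fintype A], k ≤ Fintype.card A →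
    ∀ L : W → Finset A, (∀ v, (L v).card = k) →
      ∀ f : W → W → A, (∀ x y, f x y = - f y x) →
        ∃ c : W → A, (∀ v, c v ∈ L v) ∧ ∀ ⦃x y⦄, H.Adj x y → c x - c y ≠ f x y

/-- The group choice number of a graph: the least `k` such that it is `k`-group choosable. -/
noncomputable def groupChoiceNumber {W : Type} (H : SimpleGraph W) : ℕ :=
  sInf {k | GroupChoosable H k}

/-- `G` is edge-`k`-group choosable if its line graph is `k`-group choosable. -/
def EdgeGroupChoosable {V : Type} (G : SimpleGraph V) (k : ℕ) : Prop :=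
  GroupChoosable G.lineGraph k

/-- The group-choice index of `G`: the group choice number of its line graph. -/
noncomputable def groupChoiceIndex {V : Type} (G : SimpleGraph V) : ℕ :=
  groupChoiceNumber G.lineGraph

/-!
The line graph of `P_{n+1}` is `P_n` and that of `C_n` is `C_n`, so it suffices to compute group
choice numbers of paths and cycles. The upper bounds are greedy: colouring the vertices in an order
in which each has fewer than `k` earlier neighbours, every earlier neighbour `u` of `v` forbids just
the one colour `c u + f v u` at `v`. A path has at most one earlier neighbour in its natural order
and a cycle has maximum degree `2`. Lists of size `0` or `1` fail on any graph with an edge, and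
a cycle is not `2`-group choosable over `ℤ/2ℤ`, where every edge forces the difference of its
ends.
-/

open Finset

section Transport

variable {W W' : Type} {H : SimpleGraph W} {H' : SimpleGraph W'}

lemma GroupChoosable.of_iso (e : H ≃g H') {k : ℕ} (h : GroupChoosable H k) :
    GroupChoosable H' k := by
  intro A _ _ hA L hL f hf
  obtain ⟨c, hcL, hc⟩ := h A hA (L ∘ e) (fun v => hL (e v)) (fun x y => f (e x) (e y))
    (fun x y => hf (e x) (e y))
  refine ⟨c ∘ e.symm, fun v => by simpa using hcL (e.symm v), fun x y hxy => ?_⟩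
  simpa using hc (e.symm.map_adj_iff.2 hxy)

lemma groupChoiceNumber_congr (e : H ≃g H') : groupChoiceNumber H = groupChoiceNumber H' := by
  unfold groupChoiceNumber
  congr 1
  ext k
  exact ⟨GroupChoosable.of_iso e, GroupChoosable.of_iso e.symm⟩

end Transport

lemma groupChoiceNumber_eq {W : Type} {H : SimpleGraph W} {k : ℕ} (hk : GroupChoosable H k)
    (hlt : ∀ j < k, ¬ GroupChoosable H j) : groupChoiceNumber H = k :=
  le_antisymm (Nat.sInf_le hk) (le_csInf ⟨k, hk⟩ fun j hj => not_lt.1 fun hjk => hlt j hjk hj)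

lemma not_groupChoosable_zero {W : Type} [Nonempty W] (H : SimpleGraph W) :
    ¬ GroupChoosable H 0 := by
  intro h
  obtain ⟨c, hc, -⟩ := h (ZMod 1) (Nat.zero_le _) (fun _ => ∅) (fun _ => rfl) (fun _ _ => 0)
    (by simp)
  exact notMem_empty _ (hc (Classical.arbitrary W))

lemma not_groupChoosable_one {W : Type} {H : SimpleGraph W} {x y : W} (hxy : H.Adj x y) :
    ¬ GroupChoosable H 1 := by
  intro h
  obtain ⟨c, -, hc⟩ := h (ZMod 1) (by simp) (fun _ => {0}) (fun _ => rfl) (fun _ _ => 0)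
    (by simp)
  exact hc hxy (Subsingleton.elim _ _)

lemma sub_ne_iff_of_antisymm {W A : Type} [AddCommGroup A] {f : W → W → A}
    (hf : ∀ x y, f x y = -f y x) {a b : A} {x y : W} : a - b ≠ f x y ↔ b - a ≠ f y x := by
  rw [hf x y, ← neg_sub, ne_eq, neg_inj]

theorem groupChoosable_of_card_lower_neighbors_lt {W : Type} {β : Type*} [Fintype W]
    [LinearOrder β] {H : SimpleGraph W} [DecidableRel H.Adj] {k : ℕ} {ρ : W → β}
    (hρ : ρ.Injective) (hk : ∀ v, #{u | H.Adj u v ∧ ρ u < ρ v} < k) : GroupChoosable H k := by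
  intro A _ _ _ L hL f hf
  classical
  suffices ∀ s : Finset W, ∃ c : W → A, (∀ v, c v ∈ L v) ∧
      ∀ x ∈ s, ∀ y ∈ s, H.Adj x y → c x - c y ≠ f x y by
    obtain ⟨c, hcL, hc⟩ := this univ
    exact ⟨c, hcL, fun x y hxy => hc x (mem_univ x) y (mem_univ y) hxy⟩
  intro s
  induction s using Finset.induction_on_max_value ρ with
  | empty =>
    have hne : ∀ v, ∃ a, a ∈ L v := fun v =>
      card_pos.1 (hL v ▸ (Nat.zero_le _).trans_lt (hk v))
    choose c hcL using hne
    exact ⟨c, hcL, by simp⟩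
  | insert a s has hmax ih =>
    obtain ⟨c, hcL, hc⟩ := ih
    have hFa : #({u ∈ s | H.Adj u a}.image fun u => c u + f a u) < #(L a) := by
      refine card_image_le.trans_lt (lt_of_le_of_lt (card_le_card fun u hu => ?_) (hL a ▸ hk a))
      obtain ⟨hus, hua⟩ := mem_filter.1 hu
      exact mem_filter.2 ⟨mem_univ u, hua,
        (hmax u hus).lt_of_ne (hρ.ne (ne_of_mem_of_not_mem hus has))⟩
    obtain ⟨b, hbL, hbF⟩ := exists_mem_notMem_of_card_lt_card hFa
    have hb : ∀ u ∈ s, H.Adj u a → b - c u ≠ f a u := fun u hus hua h =>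
      hbF (mem_image.2 ⟨u, mem_filter.2 ⟨hus, hua⟩, by rw [← h]; abel⟩)
    refine ⟨Function.update c a b, fun v => ?_, fun x hx y hy hxy => ?_⟩
    · by_cases hv : v = a
      · subst hv; simpa using hbL
      · simpa [hv] using hcL v
    rcases mem_insert.1 hx with rfl | hxs <;> rcases mem_insert.1 hy with rfl | hys
    · exact (H.loopless.irrefl _ hxy).elim
    · simpa [ne_of_mem_of_not_mem hys has] using hb y hys hxy.symm
    · rw [sub_ne_iff_of_antisymm hf]
      simpa [ne_of_mem_of_not_mem hxs has] using hb x hxs hxy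
    · simpa [ne_of_mem_of_not_mem hxs has, ne_of_mem_of_not_mem hys has] using hc x hxs y hys hxy

theorem groupChoosable_of_forall_degree_lt {W : Type} [Fintype W] {H : SimpleGraph W}
    [DecidableRel H.Adj] {k : ℕ} (hk : ∀ v, H.degree v < k) : GroupChoosable H k :=
  groupChoosable_of_card_lower_neighbors_lt (Fintype.equivFin W).injective fun v =>
    (card_le_card fun u hu => by simpa using (mem_filter.1 hu).2.1.symm).trans_lt (hk v)

lemma pathGraph_mk_castSucc_succ_mem_edgeSet (n : ℕ) (i : Fin n) :
    s(i.castSucc, i.succ) ∈ (pathGraph (n + 1)).edgeSet :=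
  pathGraph_adj.2 (Or.inl (by simp))

noncomputable def pathGraphIsoLineGraph (n : ℕ) :
    pathGraph n ≃g (pathGraph (n + 1)).lineGraph where
  toEquiv := Equiv.ofBijective (fun i => ⟨_, pathGraph_mk_castSucc_succ_mem_edgeSet n i⟩) <| by
    refine ⟨fun i j h => ?_, ?_⟩
    · have := Sym2.eq_iff.1 (congrArg Subtype.val h)
      simp only [Fin.ext_iff, Fin.val_castSucc, Fin.val_succ] at this
      exact Fin.ext (by omega)
    · rintro ⟨e, he⟩
      induction e using Sym2.ind with
      | h u v =>
        rcases pathGraph_adj.1 he with (h : u.val + 1 = v.val) | (h : v.val + 1 = u.val)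
        · refine ⟨⟨u, by omega⟩, Subtype.ext (Sym2.eq_iff.2 (Or.inl ?_))⟩
          simp [Fin.ext_iff, ← h]
        · refine ⟨⟨v, by omega⟩, Subtype.ext (Sym2.eq_iff.2 (Or.inr ?_))⟩
          simp [Fin.ext_iff, ← h]
  map_rel_iff' := by
    intro i j
    change (lineGraph _).Adj ⟨s(i.castSucc, i.succ), _⟩ ⟨s(j.castSucc, j.succ), _⟩ ↔ _
    simp only [lineGraph_adj_iff_exists, ne_eq, Subtype.mk.injEq, Sym2.eq_iff, Sym2.mem_iff,
      exists_eq_or_imp, exists_eq_left, pathGraph_adj]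
    simp only [Fin.ext_iff, Fin.val_castSucc, Fin.val_succ]
    omega

theorem pathGraph_groupChoosable_two (n : ℕ) : GroupChoosable (pathGraph n) 2 := by
  classical
  refine groupChoosable_of_card_lower_neighbors_lt (ρ := id) Function.injective_id fun v =>
    Nat.lt_succ_of_le (card_le_one.2 fun u hu w hw => ?_)
  simp only [mem_filter, mem_univ, true_and, pathGraph_adj, id, Fin.lt_def] at hu hw
  omega

theorem groupChoiceNumber_pathGraph {n : ℕ} (hn : 2 ≤ n) :
    groupChoiceNumber (pathGraph n) = 2 := by
  have : Nonempty (Fin n) := ⟨⟨0, by omega⟩⟩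
  have h01 : (pathGraph n).Adj ⟨0, by omega⟩ ⟨1, by omega⟩ := pathGraph_adj.2 (Or.inl rfl)
  refine groupChoiceNumber_eq (pathGraph_groupChoosable_two n) fun j hj => ?_
  interval_cases j
  exacts [not_groupChoosable_zero _, not_groupChoosable_one h01]

lemma Fin.one_add_one_ne_zero (n : ℕ) : (1 + 1 : Fin (n + 3)) ≠ 0 := by
  simp [Fin.ext_iff, Fin.val_add, Nat.mod_eq_of_lt (show 2 < n + 3 by omega)]

lemma injective_sym2_mk_self_add_one (n : ℕ) :
    Function.Injective fun i : Fin (n + 3) => s(i, i + 1) := by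
  intro i j hij
  rcases Sym2.eq_iff.1 hij with ⟨h, -⟩ | ⟨hij, hji⟩
  · exact h
  · rw [hij, add_assoc, add_eq_left] at hji
    exact absurd hji (Fin.one_add_one_ne_zero n)

lemma cycleGraph_mk_self_add_one_mem_edgeSet (n : ℕ) (i : Fin (n + 3)) :
    s(i, i + 1) ∈ (cycleGraph (n + 3)).edgeSet :=
  cycleGraph_adj.2 (Or.inr (add_sub_cancel_left i 1))

noncomputable def cycleGraphIsoLineGraph (n : ℕ) :
    cycleGraph (n + 3) ≃g (cycleGraph (n + 3)).lineGraph where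
  toEquiv := Equiv.ofBijective (fun i => ⟨_, cycleGraph_mk_self_add_one_mem_edgeSet n i⟩) <| by
    refine ⟨fun i j h => injective_sym2_mk_self_add_one n (congrArg Subtype.val h), ?_⟩
    rintro ⟨e, he⟩
    induction e using Sym2.ind with
    | h u v =>
      rcases cycleGraph_adj.1 he with h | h
      · refine ⟨v, Subtype.ext ?_⟩
        simp [← h, Sym2.eq_swap]
      · refine ⟨u, Subtype.ext ?_⟩
        simp [← h]
  map_rel_iff' := by
    intro i j
    change (lineGraph _).Adj ⟨s(i, i + 1), _⟩ ⟨s(j, j + 1), _⟩ ↔ _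
    rw [lineGraph_adj_iff_exists, ne_eq, Subtype.mk.injEq,
      (injective_sym2_mk_self_add_one n).eq_iff, cycleGraph_adj]
    simp only [Sym2.mem_iff, exists_eq_or_imp, exists_eq_left]
    have hone : (1 : Fin (n + 3)) ≠ 0 := one_ne_zero
    grind

theorem cycleGraph_not_groupChoosable_two (n : ℕ) : ¬ GroupChoosable (cycleGraph (n + 3)) 2 := by
  intro h
  classical
  -- Twisting one edge makes the differences forced around the cycle sum to `1` instead of `0`.
  let f : Fin (n + 3) → Fin (n + 3) → ZMod 2 := fun x y =>
    if s(x, y) = s(0, 1) then 1 - (n + 3 : ℕ) else 0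
  obtain ⟨c, -, hc⟩ := h (ZMod 2) (by simp) (fun _ => univ) (fun _ => by simp) f
    fun x y => by simp only [f, ZMod.neg_eq_self_mod_two, Sym2.eq_swap (a := x)]
  have hforced : ∀ i, c i - c (i + 1) = f i (i + 1) + 1 := fun i => by
    have : ∀ a b : ZMod 2, a ≠ b → a = b + 1 := by decide
    exact this _ _ (hc (cycleGraph_mk_self_add_one_mem_edgeSet n i))
  have htelescope : ∑ i, (c i - c (i + 1)) = 0 := by
    rw [sum_sub_distrib, sub_eq_zero]
    exact (Equiv.sum_comp (Equiv.addRight 1) c).symm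
  have htwist : ∀ i : Fin (n + 3), s(i, i + 1) = s(0, 1) ↔ i = 0 := fun i => by
    simpa using (injective_sym2_mk_self_add_one n).eq_iff (b := 0)
  have htotal : ∑ i, (f i (i + 1) + 1) = 1 := by
    simp only [f, htwist, sum_add_distrib, sum_ite_eq', mem_univ, if_true, sum_const, card_univ,
      Fintype.card_fin, nsmul_eq_mul, mul_one, sub_add_cancel]
  simp [hforced, htotal] at htelescope

theorem groupChoiceNumber_cycleGraph (n : ℕ) : groupChoiceNumber (cycleGraph (n + 3)) = 3 := by
  have hdeg : ∀ v, (cycleGraph (n + 3)).degree v < 3 := fun v => by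
    simp [cycleGraph_degree_three_le]
  refine groupChoiceNumber_eq (groupChoosable_of_forall_degree_lt hdeg) fun j hj => ?_
  interval_cases j
  exacts [not_groupChoosable_zero _,
    not_groupChoosable_one (cycleGraph_mk_self_add_one_mem_edgeSet n 0),
    cycleGraph_not_groupChoosable_two n]

/-- The group-choice index of the path `P_n` (`n ≥ 3`) is 2 and that of the cycle `C_n`
(`n ≥ 3`) is 3. -/
theorem stmt :
    (∀ n : ℕ, 3 ≤ n → groupChoiceIndex (pathGraph n) = 2) ∧
      (∀ n : ℕ, 3 ≤ n → groupChoiceIndex (cycleGraph n) = 3) := by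
  refine ⟨fun n hn => ?_, fun n hn => ?_⟩
  · obtain ⟨m, rfl⟩ : ∃ m, n = m + 1 := ⟨n - 1, by omega⟩
    rw [groupChoiceIndex, ← groupChoiceNumber_congr (pathGraphIsoLineGraph m)]
    exact groupChoiceNumber_pathGraph (by omega)
  · obtain ⟨m, rfl⟩ : ∃ m, n = m + 3 := ⟨n - 3, by omega⟩
    rw [groupChoiceIndex, ← groupChoiceNumber_congr (cycleGraphIsoLineGraph m)]
    exact groupChoiceNumber_cycleGraph m
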